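/- Assume 0 < r_f < 1. For every α ∈ ℝ, the critical Jacobi energy for direct insertion satisfies C_D*(α) ≥ 3(1−μ) − (1−μ)·r_f² + 2√(2μ·r_f), and equality holds if and only if cos α = −r_f/2. In particular, the global minimum of C_D* over ℝ equals 3(1−μ) − (1−μ)·r_f² + 2√(2μ·r_f). -/

import Mathlib

/-- The function G(α). -/
noncomputable def Gfun (μ rf α : ℝ) : ℝ :=
  2 * rf ^ 2 + 2 * (1 - μ) * (rf * Real.cos α + 1 - μ)
    + (1 - μ) * (2 * μ - 1)
    + 2 * (1 - μ) / Real.sqrt (1 + 2 * rf * Real.cos α + rf ^ 2)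

/-- Critical Jacobi energy for direct insertion. -/
noncomputable def CDstar (μ rf α : ℝ) : ℝ :=
  Gfun μ rf α - 2 * rf ^ 2 + 2 * Real.sqrt (2 * μ * rf)

lemma aux_key (s : ℝ) (hs : 0 < s) : 3 ≤ s ^ 2 + 2 / s ∧ (s ^ 2 + 2 / s = 3 ↔ s = 1) := by
  have h : s ^ 2 + 2 / s - 3 = (s - 1) ^ 2 * (s + 2) / s := by
    field_simp; ring
  have hnn : 0 ≤ (s - 1) ^ 2 * (s + 2) / s :=
    div_nonneg (mul_nonneg (sq_nonneg _) (by linarith)) hs.le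
  refine ⟨by linarith, ⟨fun he => ?_, fun he => by rw [he]; norm_num⟩⟩
  have h0 : (s - 1) ^ 2 * (s + 2) / s = 0 := by linarith
  have h1 : (s - 1) ^ 2 * (s + 2) = 0 := by
    field_simp at h0; linarith
  rcases mul_eq_zero.mp h1 with h2 | h2
  · have := pow_eq_zero_iff (n := 2) (by norm_num) |>.mp h2
    linarith
  · linarith

theorem CDstar_global_minimum
    (μ rf : ℝ) (hμ0 : 0 < μ) (hμ1 : μ < 1) (hrf0 : 0 < rf) (hrf1 : rf < 1) :
    (∀ α : ℝ,
      3 * (1 - μ) - (1 - μ) * rf ^ 2 + 2 * Real.sqrt (2 * μ * rf) ≤ CDstar μ rf α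
      ∧ (CDstar μ rf α = 3 * (1 - μ) - (1 - μ) * rf ^ 2 + 2 * Real.sqrt (2 * μ * rf)
          ↔ Real.cos α = -rf / 2))
    ∧ IsLeast (Set.range (CDstar μ rf))
        (3 * (1 - μ) - (1 - μ) * rf ^ 2 + 2 * Real.sqrt (2 * μ * rf)) := by
  have hμ : 0 < 1 - μ := by linarith
  have key : ∀ α : ℝ,
      3 * (1 - μ) - (1 - μ) * rf ^ 2 + 2 * Real.sqrt (2 * μ * rf) ≤ CDstar μ rf α
      ∧ (CDstar μ rf α = 3 * (1 - μ) - (1 - μ) * rf ^ 2 + 2 * Real.sqrt (2 * μ * rf)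
          ↔ Real.cos α = -rf / 2) := by
    intro α
    have hc1 : -1 ≤ Real.cos α := Real.neg_one_le_cos α
    have hq : 0 < 1 + 2 * rf * Real.cos α + rf ^ 2 := by nlinarith
    set s := Real.sqrt (1 + 2 * rf * Real.cos α + rf ^ 2) with hsdef
    have hs : 0 < s := Real.sqrt_pos.mpr hq
    have hs2 : s ^ 2 = 1 + 2 * rf * Real.cos α + rf ^ 2 := Real.sq_sqrt hq.le
    have hCD : CDstar μ rf α
        = (1 - μ) * (s ^ 2 + 2 / s) - (1 - μ) * rf ^ 2 + 2 * Real.sqrt (2 * μ * rf) := by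
      unfold CDstar Gfun
      rw [← hsdef, mul_add, hs2]
      ring
    obtain ⟨hk1, hk2⟩ := aux_key s hs
    constructor
    · rw [hCD]; nlinarith
    constructor
    · intro he
      rw [hCD] at he
      have h3 : s ^ 2 + 2 / s = 3 := by
        have h4 : (1 - μ) * (s ^ 2 + 2 / s) = (1 - μ) * 3 := by linarith
        exact mul_left_cancel₀ hμ.ne' h4
      have hs1 : s = 1 := hk2.mp h3
      rw [hs1] at hs2
      have h5 : rf * (2 * Real.cos α + rf) = 0 := by nlinarith
      rcases mul_eq_zero.mp h5 with h6 | h6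
      · linarith
      · linarith
    · intro he
      have hq1 : 1 + 2 * rf * Real.cos α + rf ^ 2 = 1 := by rw [he]; ring
      have hs1 : s = 1 := by rw [hsdef, hq1, Real.sqrt_one]
      rw [hCD, hs1]
      norm_num
      ring
  refine ⟨key, ⟨?_, ?_⟩⟩
  · have hcos : Real.cos (Real.arccos (-rf / 2)) = -rf / 2 :=
      Real.cos_arccos (by linarith) (by linarith)
    exact ⟨Real.arccos (-rf / 2), (key _).2.mpr hcos⟩
  · rintro x ⟨α, rfl⟩
    exact (key α).1
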